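/- There exist a constant δ₀ ∈ (0,1) and a uniform constant C > 0 such that for all δ ∈ (0, δ₀] and all t > 0, the smooth approximate 3-rarefaction wave satisfies ‖(ρ̄, v̄₁, θ̄)(t,·) − (ρʳ, v₁ʳ, θʳ)(·/t)‖_{L∞(ℝ)} ≤ C δ [ln(1+t) + |ln δ|] / t. -/

import Mathlib

open Real Set

noncomputable section

/-- The third eigenvalue of the 1D compressible Euler system for an ideal polytropic gas,
`λ₃(ρ, v₁, S) = v₁ + √(p_ρ(ρ,S))`, expressed via `p_ρ(ρ,S) = γRθ` in the variables
`(v₁, θ)`. -/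
def lam3 (γ R v θ : ℝ) : ℝ := v + Real.sqrt (γ * R * θ)

/-- The 3-Riemann invariant `Σ₃⁽¹⁾ = v₁ − ∫^ρ √(p_z(z,S))/z dz = v₁ − 2√(γRθ)/(γ−1)`. -/
def rinv1 (γ R v θ : ℝ) : ℝ := v - 2 * Real.sqrt (γ * R * θ) / (γ - 1)

/-- The entropy `S`, determined from `(ρ, θ)` by `Rρθ = Aρ^γ exp(((γ−1)/R)S)`;
the second 3-Riemann invariant is `Σ₃⁽²⁾ = S`. -/
def entropyS (γ R A ρ θ : ℝ) : ℝ := R / (γ - 1) * Real.log (R * θ / (A * ρ ^ (γ - 1)))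

/-- The end states `(ρ₋, v₁₋, θ₋)` and `(ρ₊, v₁₊, θ₊)` are connected by a 3-rarefaction
wave: the 3-Riemann invariants coincide and `λ₃` increases. -/
def RarefactionConnect (γ R A ρm vm θm ρp vp θp : ℝ) : Prop :=
  rinv1 γ R vp θp = rinv1 γ R vm θm ∧
  entropyS γ R A ρp θp = entropyS γ R A ρm θm ∧
  lam3 γ R vm θm < lam3 γ R vp θp

/-- `B̄` is the global smooth solution of the Burgers equation with smoothed Riemann
data `(B₊+B₋)/2 + ((B₊−B₋)/2) tanh(x₁/δ)`. -/
def IsBurgersSol (Bm Bp δ : ℝ) (Bb : ℝ → ℝ → ℝ) : Prop :=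
  ContDiffOn ℝ (⊤ : ℕ∞) (fun q : ℝ × ℝ => Bb q.1 q.2) (Set.Ici (0:ℝ) ×ˢ Set.univ) ∧
  (∀ t ≥ (0:ℝ), ∀ x : ℝ, deriv (fun s => Bb s x) t + Bb t x * deriv (Bb t) x = 0) ∧
  (∀ x : ℝ, Bb 0 x = (Bp + Bm) / 2 + (Bp - Bm) / 2 * Real.tanh (x / δ))

/-- `(ρ̄, v̄₁, θ̄)` is the smooth approximate 3-rarefaction wave built from `B̄`:
`λ₃(ρ̄, v̄₁, θ̄) = B̄` and the 3-Riemann invariants are the (common) ones of the end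
states. -/
def IsApproxWave (γ R A ρp vp θp : ℝ) (Bb ρb vb θb : ℝ → ℝ → ℝ) : Prop :=
  (∀ t x : ℝ, 0 < ρb t x ∧ 0 < θb t x) ∧
  ContDiffOn ℝ (⊤ : ℕ∞)
    (fun q : ℝ × ℝ => (ρb q.1 q.2, vb q.1 q.2, θb q.1 q.2)) (Set.Ici (0:ℝ) ×ˢ Set.univ) ∧
  (∀ t x : ℝ, lam3 γ R (vb t x) (θb t x) = Bb t x) ∧
  (∀ t x : ℝ, rinv1 γ R (vb t x) (θb t x) = rinv1 γ R vp θp) ∧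
  (∀ t x : ℝ, entropyS γ R A (ρb t x) (θb t x) = entropyS γ R A ρp θp)

/-- `(ρʳ, v₁ʳ, θʳ)` (as functions of the self-similar variable `ξ = x₁/t`) is the
self-similar 3-rarefaction wave of the Riemann problem: `λ₃(ρʳ,v₁ʳ,θʳ)(ξ) = Bʳ(ξ)`
where `Bʳ(ξ) = max(B₋, min(B₊, ξ))`, and the 3-Riemann invariants are constant. -/
def IsRarefactionWave (γ R A ρp vp θp Bm Bp : ℝ) (rρ rv rθ : ℝ → ℝ) : Prop :=
  (∀ s : ℝ, 0 < rρ s ∧ 0 < rθ s) ∧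
  (∀ s : ℝ, lam3 γ R (rv s) (rθ s) = max Bm (min Bp s)) ∧
  (∀ s : ℝ, rinv1 γ R (rv s) (rθ s) = rinv1 γ R vp θp) ∧
  (∀ s : ℝ, entropyS γ R A (rρ s) (rθ s) = entropyS γ R A ρp θp)

namespace AWC

/-- smoothed Riemann data -/
def B0 (Bm Bp δ x : ℝ) : ℝ := (Bp + Bm) / 2 + (Bp - Bm) / 2 * Real.tanh (x / δ)

lemma tanh_lt_one' (u : ℝ) : Real.tanh u < 1 := by
  have hc : 0 < Real.cosh u := Real.cosh_pos u
  have h1 : Real.cosh u - Real.sinh u = Real.exp (-u) := Real.cosh_sub_sinh u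
  have h2 := Real.exp_pos (-u)
  rw [Real.tanh_eq_sinh_div_cosh, div_lt_one hc]; linarith

lemma neg_one_lt_tanh' (u : ℝ) : -1 < Real.tanh u := by
  have hc : 0 < Real.cosh u := Real.cosh_pos u
  have h1 : Real.cosh u + Real.sinh u = Real.exp u := Real.cosh_add_sinh u
  have h2 := Real.exp_pos u
  rw [Real.tanh_eq_sinh_div_cosh, lt_div_iff₀ hc]; linarith

lemma one_sub_tanh_le (u : ℝ) : 1 - Real.tanh u ≤ 2 * Real.exp (-(2*u)) := by
  have hc : 0 < Real.cosh u := Real.cosh_pos u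
  have h1 : 1 - Real.tanh u = Real.exp (-u) / Real.cosh u := by
    rw [Real.tanh_eq_sinh_div_cosh, ← Real.cosh_sub_sinh]
    field_simp
  have h2 : Real.exp u / 2 ≤ Real.cosh u := by
    rw [Real.cosh_eq]; have := Real.exp_pos (-u); linarith
  have h3 : Real.exp (-u) / Real.cosh u ≤ Real.exp (-u) / (Real.exp u / 2) :=
    div_le_div_of_nonneg_left (Real.exp_pos (-u)).le (by positivity) h2
  have h4 : Real.exp (-u) / (Real.exp u / 2) = 2 * Real.exp (-(2*u)) := by
    rw [div_eq_iff (by positivity : (Real.exp u / 2) ≠ 0),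
      show 2 * Real.exp (-(2*u)) * (Real.exp u/2) = Real.exp (-(2*u)) * Real.exp u by ring,
      ← Real.exp_add]
    ring_nf
  linarith

lemma one_add_tanh_le (u : ℝ) : 1 + Real.tanh u ≤ 2 * Real.exp (2*u) := by
  have h := one_sub_tanh_le (-u)
  rw [Real.tanh_neg] at h
  have h2 : (-(2 * -u)) = 2*u := by ring
  rw [h2] at h; linarith

lemma B0_mem {Bm Bp : ℝ} (h : Bm < Bp) (δ x : ℝ) : B0 Bm Bp δ x ∈ Set.Ioo Bm Bp := by
  have h1 : Real.tanh (x/δ) < 1 := tanh_lt_one' _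
  have h2 : -1 < Real.tanh (x/δ) := neg_one_lt_tanh' _
  constructor <;> (unfold B0; nlinarith)

lemma B0_gap_above {Bm Bp : ℝ} (h : Bm < Bp) (δ x : ℝ) :
    Bp - B0 Bm Bp δ x ≤ (Bp - Bm) * Real.exp (-(2*(x/δ))) := by
  have := one_sub_tanh_le (x/δ)
  unfold B0; nlinarith

lemma B0_gap_below {Bm Bp : ℝ} (h : Bm < Bp) (δ x : ℝ) :
    B0 Bm Bp δ x - Bm ≤ (Bp - Bm) * Real.exp (2*(x/δ)) := by
  have := one_add_tanh_le (x/δ)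
  unfold B0; nlinarith

lemma B0_continuous (Bm Bp δ : ℝ) : Continuous (B0 Bm Bp δ) := by
  have ht : Continuous Real.tanh := by
    have : Real.tanh = fun x => Real.sinh x / Real.cosh x := by
      funext x; exact Real.tanh_eq_sinh_div_cosh x
    rw [this]
    exact Real.continuous_sinh.div Real.continuous_cosh fun x => (Real.cosh_pos x).ne'
  unfold B0
  exact continuous_const.add (continuous_const.mul (ht.comp (continuous_id.div_const δ)))


lemma char {Bm Bp δ : ℝ} {Bb : ℝ → ℝ → ℝ} (hB : IsBurgersSol Bm Bp δ Bb)
    {t : ℝ} (ht : 0 < t) (y : ℝ) :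
    Bb t (y + t * B0 Bm Bp δ y) = B0 Bm Bp δ y := by
  obtain ⟨hsm, hpde, hinit⟩ := hB
  set S : Set (ℝ × ℝ) := Set.Ici (0:ℝ) ×ˢ Set.univ with hS
  set F : ℝ × ℝ → ℝ := fun q => Bb q.1 q.2 with hF
  set b : ℝ := B0 Bm Bp δ y with hb
  set P : ℝ → ℝ × ℝ := fun s => (s, y + s * b) with hP
  set g : ℝ → ℝ := fun s => F (P s) - b with hg
  have hPc : Continuous P := by
    exact continuous_id.prodMk (continuous_const.add (continuous_id.mul continuous_const))
  have hPES : ∀ s : ℝ, 0 ≤ s → P s ∈ S := fun s hs => ⟨hs, trivial⟩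
  have hgc : ContinuousOn g (Set.Icc 0 t) := by
    apply ContinuousOn.sub _ continuousOn_const
    exact hsm.continuousOn.comp hPc.continuousOn (fun s hs => hPES s hs.1)
  have hSU : UniqueDiffOn ℝ S := (uniqueDiffOn_Ici 0).prod uniqueDiffOn_univ
  have hdc : ContinuousOn (fun q => fderivWithin ℝ F S q) S :=
    hsm.continuousOn_fderivWithin hSU (by simp)
  have hcomp : IsCompact (P '' Set.Icc 0 t) := (isCompact_Icc).image hPc
  have himS : P '' Set.Icc 0 t ⊆ S := by
    rintro q ⟨s, hs, rfl⟩; exact hPES s hs.1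
  obtain ⟨K, hK⟩ := hcomp.exists_bound_of_continuousOn (hdc.mono himS)
  have hK0 : 0 ≤ K :=
    le_trans (norm_nonneg _) (hK (P 0) ⟨0, ⟨le_refl 0, ht.le⟩, rfl⟩)
  have hSnhds : ∀ s ∈ Set.Ioo (0:ℝ) t, S ∈ nhds (P s) := by
    intro s hs
    have hop : IsOpen ((Set.Ioi (0:ℝ)) ×ˢ (Set.univ : Set ℝ)) := isOpen_Ioi.prod isOpen_univ
    exact Filter.mem_of_superset (hop.mem_nhds ⟨hs.1, trivial⟩)
      (Set.prod_mono Set.Ioi_subset_Ici_self subset_rfl)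
  have hkey : ∀ s ∈ Set.Ioo (0:ℝ) t,
      HasDerivAt g (-(g s) * (fderiv ℝ F (P s)) (0, 1)) s ∧
      ‖(fderiv ℝ F (P s)) (0, 1)‖ ≤ K := by
    intro s hs
    have hca : ContDiffAt ℝ (⊤ : ℕ∞) F (P s) := hsm.contDiffAt (hSnhds s hs)
    have hda : DifferentiableAt ℝ F (P s) := hca.differentiableAt (by simp)
    have hfd := hda.hasFDerivAt
    have hpt : HasDerivAt (fun s' => Bb s' (y + s * b)) ((fderiv ℝ F (P s)) (1, 0)) s := by
      have hpath : HasDerivAt (fun s' : ℝ => ((s', y + s * b) : ℝ × ℝ)) (1, 0) s :=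
        (hasDerivAt_id s).prodMk (hasDerivAt_const s _)
      exact hfd.comp_hasDerivAt_of_eq _ hpath rfl
    have hpx : HasDerivAt (fun x => Bb s x) ((fderiv ℝ F (P s)) (0, 1)) (y + s * b) := by
      have hpath : HasDerivAt (fun x : ℝ => ((s, x) : ℝ × ℝ)) ((0 : ℝ), (1 : ℝ)) (y + s * b) :=
        (hasDerivAt_const _ _).prodMk (hasDerivAt_id _)
      exact hfd.comp_hasDerivAt_of_eq _ hpath rfl
    have hpde' := hpde s hs.1.le (y + s * b)
    rw [hpt.deriv] at hpde'
    have hder : deriv (Bb s) (y + s * b) = (fderiv ℝ F (P s)) (0, 1) := hpx.deriv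
    rw [hder] at hpde'
    constructor
    · have hpath : HasDerivAt (fun s' : ℝ => ((s', y + s' * b) : ℝ × ℝ)) (1, b) s := by
        apply (hasDerivAt_id s).prodMk
        simpa using ((hasDerivAt_id s).mul_const b).const_add y
      have hcomp' : HasDerivAt (fun s' => F (s', y + s' * b)) ((fderiv ℝ F (P s)) (1, b)) s :=
        hfd.comp_hasDerivAt_of_eq _ hpath rfl
      have hgd : HasDerivAt g ((fderiv ℝ F (P s)) (1, b)) s := hcomp'.sub_const b
      have hsplit : ((1 : ℝ), b) = ((1:ℝ), (0:ℝ)) + b • ((0:ℝ), (1:ℝ)) := by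
        simp [Prod.ext_iff]
      have hval : (fderiv ℝ F (P s)) (1, b)
          = (fderiv ℝ F (P s)) (1, 0) + b * (fderiv ℝ F (P s)) (0, 1) := by
        rw [hsplit, map_add, map_smul]; simp [smul_eq_mul]
      have hgs : g s = Bb s (y + s * b) - b := rfl
      have hfin : (fderiv ℝ F (P s)) (1, b) = -(g s) * (fderiv ℝ F (P s)) (0, 1) := by
        rw [hval, hgs]; linear_combination hpde'
      rwa [hfin] at hgd
    · have heq : fderivWithin ℝ F S (P s) = fderiv ℝ F (P s) :=
        fderivWithin_of_mem_nhds (hSnhds s hs)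
      have h1 : ‖(fderiv ℝ F (P s)) (0, 1)‖ ≤ ‖fderiv ℝ F (P s)‖ * ‖((0:ℝ), (1:ℝ))‖ :=
        (fderiv ℝ F (P s)).le_opNorm _
      have h2 : ‖((0:ℝ), (1:ℝ))‖ = 1 := by simp [Prod.norm_def]
      have h3 : ‖fderiv ℝ F (P s)‖ ≤ K := by
        rw [← heq]; exact hK _ ⟨s, ⟨hs.1.le, hs.2.le⟩, rfl⟩
      rw [h2, mul_one] at h1; exact h1.trans h3
  have hgron : ∀ ε ∈ Set.Ioo (0:ℝ) t, ‖g t‖ ≤ ‖g ε‖ * Real.exp (K * t) := by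
    intro ε hε
    have hsub : Set.Icc ε t ⊆ Set.Icc 0 t := Set.Icc_subset_Icc hε.1.le le_rfl
    have hgr := norm_le_gronwallBound_of_norm_deriv_right_le (f := g)
      (f' := fun s => -(g s) * (fderiv ℝ F (P s)) (0, 1)) (δ := ‖g ε‖) (K := K) (ε := 0)
      (a := ε) (b := t) (hgc.mono hsub)
      (fun s hs => ((hkey s ⟨hε.1.trans_le hs.1, hs.2⟩).1).hasDerivWithinAt)
      le_rfl
      (fun s hs => by
        have h := hkey s ⟨hε.1.trans_le hs.1, hs.2⟩
        rw [norm_mul, norm_neg]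
        calc ‖g s‖ * ‖(fderiv ℝ F (P s)) (0, 1)‖ ≤ ‖g s‖ * K :=
              mul_le_mul_of_nonneg_left h.2 (norm_nonneg _)
          _ = K * ‖g s‖ + 0 := by ring)
      t ⟨hε.2.le, le_rfl⟩
    rw [gronwallBound_ε0] at hgr
    calc ‖g t‖ ≤ ‖g ε‖ * Real.exp (K * (t - ε)) := hgr
      _ ≤ ‖g ε‖ * Real.exp (K * t) := by
          apply mul_le_mul_of_nonneg_left _ (norm_nonneg _)
          exact Real.exp_le_exp.mpr (by nlinarith [hε.1])
  have hg0 : g 0 = 0 := by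
    show F (0, y + 0 * b) - b = 0
    have h0 : y + 0 * b = y := by ring
    rw [show F (0, y + 0 * b) = Bb 0 (y + 0 * b) from rfl, h0, hinit y, hb]
    simp [B0]
  have hNB : (nhdsWithin (0:ℝ) (Set.Ioo 0 t)).NeBot := by
    apply mem_closure_iff_nhdsWithin_neBot.mp
    rw [closure_Ioo ht.ne]
    exact Set.left_mem_Icc.mpr ht.le
  have htd : Filter.Tendsto (fun ε => ‖g ε‖ * Real.exp (K * t))
      (nhdsWithin (0:ℝ) (Set.Ioo 0 t)) (nhds 0) := by
    have hc0 : ContinuousWithinAt g (Set.Icc 0 t) 0 :=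
      hgc.continuousWithinAt (Set.left_mem_Icc.mpr ht.le)
    have h1 : Filter.Tendsto g (nhdsWithin (0:ℝ) (Set.Ioo 0 t)) (nhds (g 0)) :=
      hc0.tendsto.mono_left (nhdsWithin_mono (0:ℝ) Set.Ioo_subset_Icc_self)
    rw [hg0] at h1
    have h2 := (h1.norm).mul_const (Real.exp (K * t))
    simpa using h2
  have hle : ‖g t‖ ≤ 0 := by
    apply ge_of_tendsto htd
    filter_upwards [self_mem_nhdsWithin] with ε hε
    exact hgron ε hε
  have hgt : g t = 0 := norm_le_zero_iff.mp hle
  have hfin : F (P t) = b := sub_eq_zero.mp hgt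
  exact hfin


lemma exists_char {Bm Bp : ℝ} (h : Bm < Bp) (δ : ℝ) {t : ℝ} (ht : 0 ≤ t) (x : ℝ) :
    ∃ y, y + t * B0 Bm Bp δ y = x := by
  set f : ℝ → ℝ := fun y => y + t * B0 Bm Bp δ y with hf
  have hc : Continuous f := continuous_id.add (continuous_const.mul (B0_continuous Bm Bp δ))
  set a : ℝ := x - t * Bp with ha
  set c : ℝ := x - t * Bm with hcd
  have hac : a ≤ c := by
    simp only [ha, hcd]; nlinarith
  have hfa : f a ≤ x := by
    have := (B0_mem h δ a).2
    simp only [hf]; nlinarith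
  have hfc : x ≤ f c := by
    have := (B0_mem h δ c).1
    simp only [hf]; nlinarith
  have := intermediate_value_Icc hac hc.continuousOn ⟨hfa, hfc⟩
  obtain ⟨y, _, hy⟩ := this
  exact ⟨y, hy⟩

lemma clamp_est {Bm Bp δ t L : ℝ} (y : ℝ) (hmp : Bm < Bp) (hδ : 0 < δ) (ht : 0 < t)
    (hL : 1 ≤ L) (hE : Real.exp (-L) = δ / (1 + t)) :
    |B0 Bm Bp δ y - max Bm (min Bp ((y + t * B0 Bm Bp δ y) / t))| ≤
      max 1 (Bp - Bm) * δ * L / t := by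
  set b : ℝ := B0 Bm Bp δ y with hb
  have hz : (y + t * b) / t = y / t + b := by field_simp
  set z : ℝ := (y + t * b) / t with hzd
  have hb1 : Bm < b := (B0_mem hmp δ y).1
  have hb2 : b < Bp := (B0_mem hmp δ y).2
  have hM1 : (1:ℝ) ≤ max 1 (Bp - Bm) := le_max_left _ _
  have hMd : Bp - Bm ≤ max 1 (Bp - Bm) := le_max_right _ _
  have hδL : 0 ≤ δ * L := by nlinarith
  have hbig : δ / (1 + t) ≤ δ * L / t := by
    rw [div_le_div_iff₀ (by linarith) ht]
    have h0 : 0 ≤ (L - 1) * t := mul_nonneg (by linarith) ht.le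
    nlinarith
  have hMfin : (Bp - Bm) * (δ * L / t) ≤ max 1 (Bp - Bm) * δ * L / t := by
    have : (Bp - Bm) * (δ * L / t) ≤ max 1 (Bp - Bm) * (δ * L / t) :=
      mul_le_mul_of_nonneg_right hMd (by positivity)
    calc (Bp - Bm) * (δ * L / t) ≤ max 1 (Bp - Bm) * (δ * L / t) := this
      _ = max 1 (Bp - Bm) * δ * L / t := by ring
  rcases le_total 0 y with hy | hy
  · -- y ≥ 0 : clamp z ≥ b
    have hyt : 0 ≤ y / t := div_nonneg hy ht.le
    have hzb : b ≤ z := by rw [hz]; linarith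
    have h1 : b ≤ max Bm (min Bp z) := (le_min hb2.le hzb).trans (le_max_right _ _)
    have h2 : max Bm (min Bp z) ≤ z := max_le (by linarith) (min_le_right _ _)
    have h3 : max Bm (min Bp z) ≤ Bp := max_le hmp.le (min_le_left _ _)
    rw [abs_sub_comm, abs_of_nonneg (by linarith)]
    rcases le_total y (δ * L / 2) with hc | hc
    · have hzby : z - b = y / t := by rw [hz]; ring
      have hyb : y / t ≤ max 1 (Bp - Bm) * δ * L / t := by
        apply (div_le_div_iff_of_pos_right ht).mpr
        nlinarith
      linarith
    · have hLy : L ≤ 2 * (y / δ) := by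
        rw [show 2 * (y / δ) = 2 * y / δ from (mul_div_assoc 2 y δ).symm, le_div_iff₀ hδ]
        linarith
      have hexp : Real.exp (-(2 * (y / δ))) ≤ δ / (1 + t) := by
        rw [← hE]; exact Real.exp_le_exp.mpr (by linarith)
      have g1 := B0_gap_above hmp δ y
      have g2 : (Bp - Bm) * Real.exp (-(2 * (y / δ))) ≤ (Bp - Bm) * (δ / (1 + t)) :=
        mul_le_mul_of_nonneg_left hexp (by linarith)
      have g3 : (Bp - Bm) * (δ / (1 + t)) ≤ (Bp - Bm) * (δ * L / t) :=
        mul_le_mul_of_nonneg_left hbig (by linarith)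
      linarith
  · -- y ≤ 0 : clamp z ≤ b
    have hyt : y / t ≤ 0 := div_nonpos_of_nonpos_of_nonneg hy ht.le
    have hzb : z ≤ b := by rw [hz]; linarith
    have h1 : max Bm (min Bp z) ≤ b := max_le hb1.le ((min_le_right _ _).trans hzb)
    have h2 : z ≤ max Bm (min Bp z) := (le_min (by linarith) le_rfl).trans (le_max_right _ _)
    have h3 : Bm ≤ max Bm (min Bp z) := le_max_left _ _
    rw [abs_of_nonneg (by linarith)]
    rcases le_total (-y) (δ * L / 2) with hc | hc
    · have hzby : b - z = -(y / t) := by rw [hz]; ring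
      have hyb : -(y / t) ≤ max 1 (Bp - Bm) * δ * L / t := by
        rw [← neg_div]
        apply (div_le_div_iff_of_pos_right ht).mpr
        nlinarith
      linarith
    · have hLy : 2 * (y / δ) ≤ -L := by
        rw [show 2 * (y / δ) = 2 * y / δ from (mul_div_assoc 2 y δ).symm,
          div_le_iff₀ hδ]
        linarith
      have hexp : Real.exp (2 * (y / δ)) ≤ δ / (1 + t) := by
        rw [← hE]; exact Real.exp_le_exp.mpr hLy
      have g1 := B0_gap_below hmp δ y
      have g2 : (Bp - Bm) * Real.exp (2 * (y / δ)) ≤ (Bp - Bm) * (δ / (1 + t)) :=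
        mul_le_mul_of_nonneg_left hexp (by linarith)
      have g3 : (Bp - Bm) * (δ / (1 + t)) ≤ (Bp - Bm) * (δ * L / t) :=
        mul_le_mul_of_nonneg_left hbig (by linarith)
      linarith

lemma rpow_sub_le {β θa θb' u w : ℝ} (hβ : 0 < β) (hθa : 0 < θa)
    (hu : u ∈ Set.Icc θa θb') (hw : w ∈ Set.Icc θa θb') :
    |u ^ β - w ^ β| ≤ β * (θa ^ (β - 1) + θb' ^ (β - 1)) * |u - w| := by
  have hab : θa ≤ θb' := hu.1.trans hu.2
  have hθb0 : 0 < θb' := hθa.trans_le hab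
  have hder : ∀ v ∈ Set.Icc θa θb',
      HasDerivWithinAt (fun x : ℝ => x ^ β) (β * v ^ (β - 1)) (Set.Icc θa θb') v := by
    intro v hv
    exact (Real.hasDerivAt_rpow_const
      (Or.inl (ne_of_gt (hθa.trans_le hv.1)))).hasDerivWithinAt
  have hbound : ∀ v ∈ Set.Icc θa θb',
      ‖β * v ^ (β - 1)‖ ≤ β * (θa ^ (β - 1) + θb' ^ (β - 1)) := by
    intro v hv
    have hv0 : 0 < v := hθa.trans_le hv.1
    rw [Real.norm_eq_abs, abs_mul, abs_of_pos hβ, abs_of_nonneg (Real.rpow_nonneg hv0.le _)]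
    apply mul_le_mul_of_nonneg_left _ hβ.le
    rcases le_total 1 β with hβ1 | hβ1
    · have h1 : v ^ (β - 1) ≤ θb' ^ (β - 1) :=
        Real.rpow_le_rpow hv0.le hv.2 (by linarith)
      have h2 : 0 ≤ θa ^ (β - 1) := Real.rpow_nonneg hθa.le _
      linarith
    · have h1 : v ^ (β - 1) ≤ θa ^ (β - 1) :=
        Real.rpow_le_rpow_of_nonpos hθa hv.1 (by linarith)
      have h2 : 0 ≤ θb' ^ (β - 1) := Real.rpow_nonneg hθb0.le _
      linarith
  have := Convex.norm_image_sub_le_of_norm_hasDerivWithin_le hder hbound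
    (convex_Icc _ _) hw hu
  simpa [Real.norm_eq_abs] using this


lemma entropy_inv {γ R A ρ1 θ1 ρp θp : ℝ} (hγ : 1 < γ) (hR : 0 < R) (hA : 0 < A)
    (h1 : 0 < ρ1) (hθ1 : 0 < θ1) (hp : 0 < ρp) (hθp : 0 < θp)
    (he : entropyS γ R A ρ1 θ1 = entropyS γ R A ρp θp) :
    ρ1 = (ρp ^ (γ - 1) / θp) ^ (γ - 1)⁻¹ * θ1 ^ (γ - 1)⁻¹ := by
  have hg1 : (0:ℝ) < γ - 1 := by linarith
  have hc : R / (γ - 1) ≠ 0 := by positivity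
  unfold entropyS at he
  have he2 := mul_left_cancel₀ hc he
  have hr1 : (0:ℝ) < ρ1 ^ (γ - 1) := Real.rpow_pos_of_pos h1 _
  have hrp : (0:ℝ) < ρp ^ (γ - 1) := Real.rpow_pos_of_pos hp _
  have p1 : (0:ℝ) < R * θ1 / (A * ρ1 ^ (γ - 1)) := by positivity
  have p2 : (0:ℝ) < R * θp / (A * ρp ^ (γ - 1)) := by positivity
  have heq : R * θ1 / (A * ρ1 ^ (γ - 1)) = R * θp / (A * ρp ^ (γ - 1)) := by
    rw [← Real.exp_log p1, ← Real.exp_log p2, he2]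
  have hpow : ρ1 ^ (γ - 1) = ρp ^ (γ - 1) / θp * θ1 := by
    field_simp at heq ⊢
    have h3 : R * A * (θ1 * ρp ^ (γ - 1) - θp * ρ1 ^ (γ - 1)) = 0 := by
      linear_combination (R * A) * heq
    have h4 : θ1 * ρp ^ (γ - 1) - θp * ρ1 ^ (γ - 1) = 0 := by
      rcases mul_eq_zero.mp h3 with h | h
      · exact absurd h (by positivity)
      · exact h
    linarith
  have hKpos : (0:ℝ) < ρp ^ (γ - 1) / θp := by positivity
  have : ρ1 = (ρp ^ (γ - 1) / θp * θ1) ^ (γ - 1)⁻¹ := by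
    rw [← hpow, ← Real.rpow_mul h1.le, mul_inv_cancel₀ (ne_of_gt hg1), Real.rpow_one]
  rw [this, Real.mul_rpow hKpos.le hθ1.le]

end AWC

set_option maxHeartbeats 2000000 in
/-- the smooth approximate 3-rarefaction wave converges to the exact
self-similar rarefaction fan in `L^∞(ℝ)` at rate `δ(ln(1+t)+|ln δ|)/t`, uniformly
for `δ ∈ (0, δ₀]` and `t > 0`. -/
theorem approx_wave_convergence
    (γ R A : ℝ) (hγ : 1 < γ) (hR : 0 < R) (hA : 0 < A)
    (ρm vm θm ρp vp θp : ℝ) (hρm : 0 < ρm) (hθm : 0 < θm) (hρp : 0 < ρp) (hθp : 0 < θp)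
    (hconn : RarefactionConnect γ R A ρm vm θm ρp vp θp)
    (rρ rv rθ : ℝ → ℝ)
    (hrar : IsRarefactionWave γ R A ρp vp θp (lam3 γ R vm θm) (lam3 γ R vp θp) rρ rv rθ) :
    ∃ δ₀ ∈ Set.Ioo (0:ℝ) 1, ∃ C > (0:ℝ),
      ∀ δ : ℝ, 0 < δ → δ ≤ δ₀ →
      ∀ Bb : ℝ → ℝ → ℝ, IsBurgersSol (lam3 γ R vm θm) (lam3 γ R vp θp) δ Bb →
      ∀ ρb vb θb : ℝ → ℝ → ℝ, IsApproxWave γ R A ρp vp θp Bb ρb vb θb →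
      ∀ t > (0:ℝ), ∀ x : ℝ,
        |ρb t x - rρ (x / t)| ≤ C * δ * (Real.log (1 + t) + |Real.log δ|) / t ∧
        |vb t x - rv (x / t)| ≤ C * δ * (Real.log (1 + t) + |Real.log δ|) / t ∧
        |θb t x - rθ (x / t)| ≤ C * δ * (Real.log (1 + t) + |Real.log δ|) / t := by

  classical
  obtain ⟨hri, hent2, hmp⟩ := hconn
  set Bm : ℝ := lam3 γ R vm θm with hBmd
  set Bp : ℝ := lam3 γ R vp θp with hBpd
  set r : ℝ := rinv1 γ R vp θp with hrd
  have hγ1 : (0:ℝ) < γ - 1 := by linarith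
  have hγ0 : (0:ℝ) < γ := by linarith
  have hγR : (0:ℝ) < γ * R := mul_pos hγ0 hR
  set κ : ℝ := 2 / (γ - 1) with hκd
  have hκ : 0 < κ := by rw [hκd]; positivity
  set cm : ℝ := Real.sqrt (γ * R * θm) with hcmd
  set cp : ℝ := Real.sqrt (γ * R * θp) with hcpd
  have hcm0 : 0 < cm := Real.sqrt_pos.mpr (by positivity)
  have hcp0 : 0 < cp := Real.sqrt_pos.mpr (by positivity)
  have hcm2 : cm ^ 2 = γ * R * θm := Real.sq_sqrt (by positivity)
  have hcp2 : cp ^ 2 = γ * R * θp := Real.sq_sqrt (by positivity)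
  have hBpr : Bp - r = (1 + κ) * cp := by
    rw [hBpd, hrd, hκd, hcpd]; unfold lam3 rinv1; ring
  have hBmr : Bm - r = (1 + κ) * cm := by
    rw [hBmd, hri, hκd, hcmd]; unfold lam3 rinv1; ring
  have hcmcp : cm ≤ cp := by
    have h1 : (1 + κ) * cm ≤ (1 + κ) * cp := by linarith
    exact le_of_mul_le_mul_left h1 (by linarith)
  have hθmp : θm ≤ θp := by
    have h1 : cm ^ 2 ≤ cp ^ 2 := pow_le_pow_left₀ hcm0.le hcmcp 2
    have h2 : γ * R * θm ≤ γ * R * θp := by rw [← hcm2, ← hcp2]; exact h1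
    exact (mul_le_mul_iff_right₀ hγR).mp h2
  set β : ℝ := (γ - 1)⁻¹ with hβd
  have hβ : 0 < β := by rw [hβd]; positivity
  set Kc : ℝ := ρp ^ (γ - 1) / θp with hKcd
  have hKc0 : 0 < Kc := by
    rw [hKcd]; exact div_pos (Real.rpow_pos_of_pos hρp _) hθp
  set Cθ : ℝ := 2 * cp / ((γ * R) * (1 + κ)) with hCθd
  have hCθ0 : 0 < Cθ := by rw [hCθd]; positivity
  set Cρ : ℝ := Kc ^ β * (β * (θm ^ (β - 1) + θp ^ (β - 1))) with hCρd
  have hCρ0 : 0 < Cρ := by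
    rw [hCρd]
    have h1 : 0 < Kc ^ β := Real.rpow_pos_of_pos hKc0 _
    have h2 : 0 < θm ^ (β - 1) := Real.rpow_pos_of_pos hθm _
    have h3 : 0 < θp ^ (β - 1) := Real.rpow_pos_of_pos hθp _
    positivity
  set Cb : ℝ := max 1 (Bp - Bm) with hCbd
  have hCb1 : (1:ℝ) ≤ Cb := le_max_left _ _
  set C : ℝ := Cb * (1 + Cθ + Cρ * Cθ) with hCd
  have hC0 : 0 < C := by
    have h := mul_pos hCρ0 hCθ0
    rw [hCd]
    have h2 : (0:ℝ) < 1 + Cθ + Cρ * Cθ := by linarith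
    exact mul_pos (by linarith) h2
  refine ⟨Real.exp (-1), ⟨Real.exp_pos _, ?_⟩, C, hC0, ?_⟩
  · have := Real.exp_lt_exp.mpr (show (-1:ℝ) < 0 by norm_num)
    rwa [Real.exp_zero] at this
  intro δ hδ hδ0 Bb hBb ρb vb θb hw t ht x
  set L : ℝ := Real.log (1 + t) + |Real.log δ| with hLd
  have hlogδ : Real.log δ ≤ -1 := by
    have h := Real.log_le_log hδ hδ0
    rwa [Real.log_exp] at h
  have habs : |Real.log δ| = -Real.log δ := abs_of_nonpos (by linarith)
  have hlog1t : 0 ≤ Real.log (1 + t) := Real.log_nonneg (by linarith)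
  have hL1 : 1 ≤ L := by rw [hLd, habs]; linarith
  have hE : Real.exp (-L) = δ / (1 + t) := by
    rw [hLd, habs, neg_add, neg_neg, Real.exp_add, Real.exp_neg,
      Real.exp_log (by linarith : (0:ℝ) < 1 + t), Real.exp_log hδ]
    ring
  have hδL : 0 ≤ δ * L / t :=
    div_nonneg (mul_nonneg hδ.le (by linarith)) ht.le
  -- characteristic representation of Bb
  obtain ⟨y, hy⟩ := AWC.exists_char hmp δ ht.le x
  have hbx : Bb t x = AWC.B0 Bm Bp δ y := by rw [← hy]; exact AWC.char hBb ht y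
  have hest' := AWC.clamp_est (Bm := Bm) (Bp := Bp) (t := t) (L := L) y hmp hδ ht hL1 hE
  rw [hy] at hest'
  set b : ℝ := AWC.B0 Bm Bp δ y with hbd
  have hbmem : b ∈ Set.Ioo Bm Bp := AWC.B0_mem hmp δ y
  set ξ : ℝ := x / t with hξd
  set br : ℝ := max Bm (min Bp ξ) with hbrd
  have hbrm : Bm ≤ br := le_max_left _ _
  have hbrp : br ≤ Bp := max_le hmp.le (min_le_left _ _)
  rw [← hCbd] at hest'
  -- hest' : |b - br| ≤ Cb * δ * L / t
  obtain ⟨hwpos, hwsm, hwlam, hwri, hwent⟩ := hw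
  obtain ⟨hrpos, hrlam, hrri, hrent⟩ := hrar
  have hθb0 : 0 < θb t x := (hwpos t x).2
  have hρb0 : 0 < ρb t x := (hwpos t x).1
  have hrθ0 : 0 < rθ ξ := (hrpos ξ).2
  have hrρ0 : 0 < rρ ξ := (hrpos ξ).1
  set cb : ℝ := Real.sqrt (γ * R * θb t x) with hcbd
  set cr : ℝ := Real.sqrt (γ * R * rθ ξ) with hcrd
  have hgθb : (0:ℝ) ≤ γ * R * θb t x := by positivity
  have hgθr : (0:ℝ) ≤ γ * R * rθ ξ := by positivity
  have hcb2 : cb ^ 2 = γ * R * θb t x := Real.sq_sqrt hgθb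
  have hcr2 : cr ^ 2 = γ * R * rθ ξ := Real.sq_sqrt hgθr
  have hcbn : 0 ≤ cb := Real.sqrt_nonneg _
  have hcrn : 0 ≤ cr := Real.sqrt_nonneg _
  have e1 : vb t x + cb = b := by
    have h := hwlam t x
    rw [hbx] at h
    rw [hcbd]; unfold lam3 at h; exact h
  have e2 : vb t x - κ * cb = r := by
    have h := hwri t x
    rw [← hrd] at h
    unfold rinv1 at h
    rw [hcbd, hκd]
    linear_combination h
  have e3 : rv ξ + cr = br := by
    have h := hrlam ξ
    rw [hcrd]; unfold lam3 at h; exact h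
  have e4 : rv ξ - κ * cr = r := by
    have h := hrri ξ
    rw [← hrd] at h
    unfold rinv1 at h
    rw [hcrd, hκd]
    linear_combination h
  have hcbval : (1 + κ) * cb = b - r := by linarith
  have hcrval : (1 + κ) * cr = br - r := by linarith
  have hcbcp : cb ≤ cp := by
    have h1 : (1 + κ) * cb ≤ (1 + κ) * cp := by linarith [hbmem.2]
    exact le_of_mul_le_mul_left h1 (by linarith)
  have hcbcm : cm ≤ cb := by
    have h1 : (1 + κ) * cm ≤ (1 + κ) * cb := by linarith [hbmem.1]
    exact le_of_mul_le_mul_left h1 (by linarith)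
  have hcrcp : cr ≤ cp := by
    have h1 : (1 + κ) * cr ≤ (1 + κ) * cp := by linarith
    exact le_of_mul_le_mul_left h1 (by linarith)
  have hcrcm : cm ≤ cr := by
    have h1 : (1 + κ) * cm ≤ (1 + κ) * cr := by linarith
    exact le_of_mul_le_mul_left h1 (by linarith)
  -- velocity estimate
  have hvabs : |vb t x - rv ξ| ≤ |b - br| := by
    have hv : (1 + κ) * (vb t x - rv ξ) = κ * (b - br) := by
      linear_combination κ * e1 - κ * e3 + e2 - e4
    have h1 : |(1 + κ) * (vb t x - rv ξ)| = (1 + κ) * |vb t x - rv ξ| := by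
      rw [abs_mul, abs_of_pos (by linarith)]
    have h2 : |κ * (b - br)| = κ * |b - br| := by
      rw [abs_mul, abs_of_pos hκ]
    have h3 := congrArg abs hv
    rw [h1, h2] at h3
    have h4 : |vb t x - rv ξ| = κ * |b - br| / (1 + κ) := by
      rw [eq_div_iff (by linarith : (1 + κ) ≠ (0:ℝ))]
      linarith
    rw [h4, div_le_iff₀ (by linarith : (0:ℝ) < 1 + κ)]
    have h5 := abs_nonneg (b - br)
    have h6 : |b - br| * κ ≤ |b - br| * (1 + κ) :=
      mul_le_mul_of_nonneg_left (by linarith) h5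
    linarith
  -- temperature estimate
  have hθabs : |θb t x - rθ ξ| ≤ Cθ * |b - br| := by
    have h0 : θb t x - rθ ξ = ((cb + cr) / ((1 + κ) * (γ * R))) * (b - br) := by
      have hsq : γ * R * (θb t x) - γ * R * (rθ ξ) = (cb + cr) * (cb - cr) := by
        linear_combination hcr2 - hcb2
      have hcd : (1 + κ) * (cb - cr) = b - br := by linarith
      have hkey : (θb t x - rθ ξ) * ((1 + κ) * (γ * R)) = (cb + cr) * (b - br) := by
        linear_combination (1 + κ) * hsq + (cb + cr) * hcd
      rw [div_mul_eq_mul_div, eq_div_iff (by positivity : ((1 + κ) * (γ * R)) ≠ 0)]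
      linarith [hkey]
    rw [h0, abs_mul]
    have h1 : |(cb + cr) / ((1 + κ) * (γ * R))| = (cb + cr) / ((1 + κ) * (γ * R)) :=
      abs_of_nonneg (div_nonneg (by linarith) (by positivity))
    rw [h1]
    apply mul_le_mul_of_nonneg_right _ (abs_nonneg _)
    rw [hCθd, div_le_div_iff₀ (by positivity) (by positivity)]
    have h6 : cb + cr ≤ 2 * cp := by linarith
    have h7 : (0:ℝ) ≤ (γ * R) * (1 + κ) := by positivity
    calc (cb + cr) * ((γ * R) * (1 + κ)) ≤ (2 * cp) * ((γ * R) * (1 + κ)) :=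
          mul_le_mul_of_nonneg_right h6 h7
      _ = 2 * cp * ((1 + κ) * (γ * R)) := by ring
  -- density estimate
  have hρbv : ρb t x = Kc ^ β * (θb t x) ^ β := by
    rw [hKcd, hβd]
    exact AWC.entropy_inv hγ hR hA hρb0 hθb0 hρp hθp (hwent t x)
  have hρrv : rρ ξ = Kc ^ β * (rθ ξ) ^ β := by
    rw [hKcd, hβd]
    exact AWC.entropy_inv hγ hR hA hrρ0 hrθ0 hρp hθp (hrent ξ)
  have hsqb1 : cm ^ 2 ≤ cb ^ 2 := pow_le_pow_left₀ hcm0.le hcbcm 2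
  have hsqb2 : cb ^ 2 ≤ cp ^ 2 := pow_le_pow_left₀ hcbn hcbcp 2
  have hsqr1 : cm ^ 2 ≤ cr ^ 2 := pow_le_pow_left₀ hcm0.le hcrcm 2
  have hsqr2 : cr ^ 2 ≤ cp ^ 2 := pow_le_pow_left₀ hcrn hcrcp 2
  have hθbmem : θb t x ∈ Set.Icc θm θp := by
    constructor
    · exact (mul_le_mul_iff_right₀ hγR).mp (by rw [← hcm2, ← hcb2] at *; linarith)
    · exact (mul_le_mul_iff_right₀ hγR).mp (by rw [← hcp2, ← hcb2] at *; linarith)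
  have hθrmem : rθ ξ ∈ Set.Icc θm θp := by
    constructor
    · exact (mul_le_mul_iff_right₀ hγR).mp (by rw [← hcm2, ← hcr2] at *; linarith)
    · exact (mul_le_mul_iff_right₀ hγR).mp (by rw [← hcp2, ← hcr2] at *; linarith)
  have hρabs : |ρb t x - rρ ξ| ≤ Cρ * |θb t x - rθ ξ| := by
    rw [hρbv, hρrv, ← mul_sub, abs_mul,
      abs_of_nonneg (Real.rpow_nonneg hKc0.le _)]
    have hlip := AWC.rpow_sub_le hβ hθm hθbmem hθrmem
    calc Kc ^ β * |(θb t x) ^ β - (rθ ξ) ^ β|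
        ≤ Kc ^ β * (β * (θm ^ (β - 1) + θp ^ (β - 1)) * |θb t x - rθ ξ|) :=
          mul_le_mul_of_nonneg_left hlip (Real.rpow_nonneg hKc0.le _)
      _ = Cρ * |θb t x - rθ ξ| := by rw [hCρd]; ring
  -- combine
  have hCbE : 0 ≤ Cb * δ * L / t := by
    have : Cb * δ * L / t = Cb * (δ * L / t) := by ring
    rw [this]; exact mul_nonneg (by linarith) hδL
  have hmono : ∀ a : ℝ, 0 ≤ a → a ≤ 1 + Cθ + Cρ * Cθ →
      a * (Cb * δ * L / t) ≤ C * δ * L / t := by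
    intro a _ hab
    calc a * (Cb * δ * L / t) ≤ (1 + Cθ + Cρ * Cθ) * (Cb * δ * L / t) :=
          mul_le_mul_of_nonneg_right hab hCbE
      _ = C * δ * L / t := by rw [hCd]; ring
  have hρCθ := mul_pos hCρ0 hCθ0
  refine ⟨?_, ?_, ?_⟩
  · calc |ρb t x - rρ ξ| ≤ Cρ * |θb t x - rθ ξ| := hρabs
      _ ≤ Cρ * (Cθ * |b - br|) :=
          mul_le_mul_of_nonneg_left hθabs hCρ0.le
      _ ≤ Cρ * (Cθ * (Cb * δ * L / t)) := by
          apply mul_le_mul_of_nonneg_left _ hCρ0.le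
          exact mul_le_mul_of_nonneg_left hest' hCθ0.le
      _ = (Cρ * Cθ) * (Cb * δ * L / t) := by ring
      _ ≤ C * δ * L / t := hmono _ hρCθ.le (by linarith)
  · calc |vb t x - rv ξ| ≤ |b - br| := hvabs
      _ ≤ Cb * δ * L / t := hest'
      _ = 1 * (Cb * δ * L / t) := by ring
      _ ≤ C * δ * L / t := hmono 1 (by norm_num) (by linarith)
  · calc |θb t x - rθ ξ| ≤ Cθ * |b - br| := hθabs
      _ ≤ Cθ * (Cb * δ * L / t) := mul_le_mul_of_nonneg_left hest' hCθ0.le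
      _ ≤ C * δ * L / t := hmono _ hCθ0.le (by linarith)

-- axiom check
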